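/- arXiv:2009.14298 — 5 statements merged into one kernel-verified Lean document; each statement's English description precedes it below -/
import Mathlib

section
/- Let W be the elliptic curve over ℚ with Weierstrass equation y² + xy + y = x³ + x² − 520x + 4745 (Weierstrass coefficients a₁ = 1, a₂ = 1, a₃ = 1, a₄ = −520, a₆ = 4745; curve 2130.j4). Then (13, 13) is a rational point of W of additive order exactly 4 in W(ℚ): one has 4 • (13, 13) = O while 2 • (13, 13) ≠ O, where O is the point at infinity. -/
/-- The elliptic curve 2130.j4: `y² + xy + y = x³ + x² - 520x + 4745`. -/
def W2130j4 : WeierstrassCurve.Affine ℚ :=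
  { a₁ := 1, a₂ := 1, a₃ := 1, a₄ := -520, a₆ := 4745 }

/-!
The tangent to `W` at `P = (13, 13)` is the horizontal line `y = 13`, which meets `W` a third
time at `(-27, 13)`; reflecting, `2P = (-27, 13)`. The tangent at `(-27, 13)` is vertical
(the point is fixed by negation), so `2P` is a nonzero point of order `2` and `P` has order `4`.
-/

open WeierstrassCurve.Affine

namespace WeierstrassCurve.Affine.Point

variable {F : Type*} [Field F] [DecidableEq F] {W : WeierstrassCurve.Affine F}

lemma add_self_of_Y_ne_eq_some {x y x' y' : F} {h : W.Nonsingular x y} (h' : W.Nonsingular x' y')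
    (hy : y ≠ W.negY x y) (hx' : W.addX x x (W.slope x x y y) = x')
    (hy' : W.addY x x y (W.slope x x y y) = y') :
    some _ _ h + some _ _ h = some _ _ h' := by
  rw [add_self_of_Y_ne hy]
  subst hx' hy'
  rfl

end WeierstrassCurve.Affine.Point

lemma W2130j4_nonsingular_13_13 : W2130j4.Nonsingular 13 13 := by
  rw [nonsingular_iff, equation_iff]
  norm_num [W2130j4]

lemma W2130j4_nonsingular_neg27_13 : W2130j4.Nonsingular (-27) 13 := by
  rw [nonsingular_iff, equation_iff]
  norm_num [W2130j4]

lemma W2130j4_Y_ne_negY_13_13 : (13 : ℚ) ≠ W2130j4.negY 13 13 := by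
  norm_num [negY, W2130j4]

lemma W2130j4_slope_13_13 : W2130j4.slope 13 13 13 13 = 0 := by
  rw [slope_of_Y_ne rfl W2130j4_Y_ne_negY_13_13]
  norm_num [negY, W2130j4]

lemma W2130j4_add_self_13_13 :
    Point.some _ _ W2130j4_nonsingular_13_13 + Point.some _ _ W2130j4_nonsingular_13_13 =
      Point.some _ _ W2130j4_nonsingular_neg27_13 := by
  have hx : W2130j4.addX 13 13 (W2130j4.slope 13 13 13 13) = -27 := by
    rw [W2130j4_slope_13_13]
    norm_num [addX, W2130j4]
  refine Point.add_self_of_Y_ne_eq_some _ W2130j4_Y_ne_negY_13_13 hx ?_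
  rw [addY, negAddY, hx, W2130j4_slope_13_13]
  norm_num [negY, W2130j4]

lemma W2130j4_add_self_neg27_13 :
    Point.some _ _ W2130j4_nonsingular_neg27_13 + Point.some _ _ W2130j4_nonsingular_neg27_13 =
      0 :=
  Point.add_self_of_Y_eq (by norm_num [negY, W2130j4])

/-- The rational point `(13, 13)` on the curve `y² + xy + y = x³ + x² - 520x + 4745` (2130.j4)
has additive order exactly 4: `4 • (13, 13) = O` while `2 • (13, 13) ≠ O`. -/
theorem order_four_point_2130j4 :
    ∃ h : W2130j4.Nonsingular 13 13,
      (4 : ℤ) • WeierstrassCurve.Affine.Point.some _ _ h = 0 ∧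
        (2 : ℤ) • WeierstrassCurve.Affine.Point.some _ _ h ≠ 0 := by
  refine ⟨W2130j4_nonsingular_13_13, ?_, ?_⟩
  · rw [show (4 : ℤ) = 2 + 2 by norm_num, add_zsmul, two_zsmul, W2130j4_add_self_13_13,
      W2130j4_add_self_neg27_13]
  · rw [two_zsmul, W2130j4_add_self_13_13]
    exact Point.some_ne_zero _
end

section
/- For every integer k ≥ 1, with a = −(12k² + 24k + 11), b = 4(k+1)²(3k+2)(3k+4), x₀ = 2(k+1)(3k+2), x₁ = 2(k+1)(3k+4), the following identity holds in the group of rational points of the Weierstrass curve C_k : y² = x³ + a·x² + b·x over ℚ (with the point at infinity as identity): (0, 0) + (x₁, x₁) = (x₀, −x₀). -/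
/-- The "pentagonal" Weierstrass curve `y² = x³ + a x² + b x` over `ℚ`, where
`a = -(12k² + 24k + 11)` and `b = 4(k+1)²(3k+2)(3k+4)` (Notation 6.3 of the paper). -/
def pentagonCurve (k : ℤ) : WeierstrassCurve.Affine ℚ :=
  { a₁ := 0
    a₂ := -(12 * (k : ℚ) ^ 2 + 24 * (k : ℚ) + 11)
    a₃ := 0
    a₄ := 4 * ((k : ℚ) + 1) ^ 2 * (3 * (k : ℚ) + 2) * (3 * (k : ℚ) + 4)
    a₆ := 0 }

/-- `x₀ = 2(k+1)(3k+2)`. -/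
def pentagonX₀ (k : ℤ) : ℚ := 2 * ((k : ℚ) + 1) * (3 * (k : ℚ) + 2)

/-- `x₁ = 2(k+1)(3k+4)`. -/
def pentagonX₁ (k : ℤ) : ℚ := 2 * ((k : ℚ) + 1) * (3 * (k : ℚ) + 4)

/-
The line `y = x` passes through `(0, 0)` and `(x₁, x₁)`; substituting it into the cubic leaves
`x² + (a - 1) x + b`, whose roots `x₁` and `x₀` satisfy `x₁ + x₀ = 1 - a`. So the third point of
the line on `C_k` is `(x₀, x₀)`, and the chord construction gives `(0, 0) + (x₁, x₁) = (x₀, -x₀)`.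
Nonsingularity is automatic at points with `y ≠ 0`, and holds at `(0, 0)` because `b ≠ 0`.
-/

namespace WeierstrassCurve.Affine

lemma nonsingular_of_Y_ne_zero {R : Type*} [CommRing R] [NoZeroDivisors R] [NeZero (2 : R)]
    {W : Affine R} (ha₁ : W.a₁ = 0) (ha₃ : W.a₃ = 0) {x y : R} (h : W.Equation x y)
    (hy : y ≠ 0) : W.Nonsingular x y :=
  (nonsingular_iff' x y).mpr ⟨h, Or.inr (by simpa [ha₁, ha₃] using mul_ne_zero two_ne_zero hy)⟩

variable {F : Type*} [Field F] [DecidableEq F] {W : Affine F}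

lemma Point.some_add_some_of_collinear {x₁ y₁ x₂ y₂ x₃ y₃ ℓ : F} (h₁ : W.Nonsingular x₁ y₁)
    (h₂ : W.Nonsingular x₂ y₂) (h₃ : W.Nonsingular x₃ y₃) (hx : x₁ ≠ x₂)
    (hy₂ : y₂ = y₁ + ℓ * (x₂ - x₁)) (hx₃ : x₁ + x₂ + x₃ = ℓ ^ 2 + W.a₁ * ℓ - W.a₂)
    (hy₃ : y₃ = W.negY x₃ (ℓ * (x₃ - x₁) + y₁)) :
    Point.some x₁ y₁ h₁ + Point.some x₂ y₂ h₂ = Point.some x₃ y₃ h₃ := by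
  have hslope : W.slope x₁ x₂ y₁ y₂ = ℓ := by
    rw [slope_of_X_ne hx, div_eq_iff (sub_ne_zero.mpr hx), hy₂]
    ring
  have hX : W.addX x₁ x₂ ℓ = x₃ := by
    rw [addX]
    linear_combination -hx₃
  rw [Point.add_of_X_ne hx, Point.some.injEq, hslope, addY, negAddY, hX, hy₃]
  exact ⟨rfl, rfl⟩

end WeierstrassCurve.Affine

open WeierstrassCurve.Affine

section Pentagon

variable {k : ℤ}

lemma pentagon_factors_ne_zero (hk : k ≠ -1) :
    (k : ℚ) + 1 ≠ 0 ∧ 3 * (k : ℚ) + 2 ≠ 0 ∧ 3 * (k : ℚ) + 4 ≠ 0 := by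
  refine ⟨?_, ?_, ?_⟩ <;> norm_cast <;> omega

lemma pentagonX₀_ne_zero (hk : k ≠ -1) : pentagonX₀ k ≠ 0 :=
  have ⟨h₁, h₂, _⟩ := pentagon_factors_ne_zero hk
  mul_ne_zero (mul_ne_zero two_ne_zero h₁) h₂

lemma pentagonX₁_ne_zero (hk : k ≠ -1) : pentagonX₁ k ≠ 0 :=
  have ⟨h₁, _, h₃⟩ := pentagon_factors_ne_zero hk
  mul_ne_zero (mul_ne_zero two_ne_zero h₁) h₃

lemma pentagonCurve_nonsingular_zero (hk : k ≠ -1) : (pentagonCurve k).Nonsingular 0 0 := by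
  obtain ⟨h₁, h₂, h₃⟩ := pentagon_factors_ne_zero hk
  simp only [nonsingular_zero, pentagonCurve]
  exact ⟨trivial, Or.inr (by positivity)⟩

variable (k)

lemma pentagonCurve_equation_X₁ : (pentagonCurve k).Equation (pentagonX₁ k) (pentagonX₁ k) := by
  rw [equation_iff]
  simp only [pentagonCurve, pentagonX₁]
  ring

lemma pentagonCurve_equation_X₀ : (pentagonCurve k).Equation (pentagonX₀ k) (-pentagonX₀ k) := by
  rw [equation_iff]
  simp only [pentagonCurve, pentagonX₀]
  ring

lemma pentagonX₁_add_pentagonX₀ :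
    pentagonX₁ k + pentagonX₀ k = 1 + (12 * (k : ℚ) ^ 2 + 24 * k + 11) := by
  simp only [pentagonX₀, pentagonX₁]
  ring

end Pentagon

/-- For every integer `k ≥ 1`, in the group of rational points of the pentagonal curve one has
`(0, 0) + (x₁, x₁) = (x₀, -x₀)` (the divisor relation `d₁ + d₂ ∼ d₄ + d₅` of Lemma 6.4(i)). -/
theorem pentagonCurve_add_eq (k : ℤ) (hk : 1 ≤ k) :
    ∃ (h₄ : (pentagonCurve k).Nonsingular 0 0)
      (h₅ : (pentagonCurve k).Nonsingular (pentagonX₁ k) (pentagonX₁ k))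
      (h₂ : (pentagonCurve k).Nonsingular (pentagonX₀ k) (-pentagonX₀ k)),
      WeierstrassCurve.Affine.Point.some _ _ h₄ + WeierstrassCurve.Affine.Point.some _ _ h₅ =
        WeierstrassCurve.Affine.Point.some _ _ h₂ := by
  have hk' : k ≠ -1 := by omega
  have hx₁ := pentagonX₁_ne_zero hk'
  refine ⟨pentagonCurve_nonsingular_zero hk',
    nonsingular_of_Y_ne_zero rfl rfl (pentagonCurve_equation_X₁ k) hx₁,
    nonsingular_of_Y_ne_zero rfl rfl (pentagonCurve_equation_X₀ k)
      (neg_ne_zero.mpr (pentagonX₀_ne_zero hk')), ?_⟩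
  refine Point.some_add_some_of_collinear (ℓ := 1) _ _ _ hx₁.symm (by ring) ?_ ?_
  all_goals simp only [pentagonCurve, negY]
  · linear_combination pentagonX₁_add_pentagonX₀ k
  · ring
end

section
/- For every integer k ≥ 2, set e = −(4k+2), a = −k(2k+1)/(k+2) and b = 4k(k+1)⁴(2k+1)/((k+2)²(k−1)²), and let C_k be the Weierstrass curve over ℚ with equation y² + e·x·y + b·y = x³ + a·x² (Weierstrass coefficients a₁ = e, a₂ = a, a₃ = b, a₄ = 0, a₆ = 0). Then the discriminant of C_k is nonzero; in particular C_k is a smooth elliptic curve over ℚ. -/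
/-!
The contributions of `b₂`, `b₄` and `b₈` to the discriminant cancel identically in `k`, leaving
`Δ = -27 a₃⁴`; and `a₃ > 0` once `k ≥ 2`.
-/

/-- The "heptagonal" Weierstrass curve `y² + e·x·y + b·y = x³ + a·x²` over `ℚ`, where
`e = -(4k+2)`, `a = -k(2k+1)/(k+2)` and `b = 4k(k+1)⁴(2k+1)/((k+2)²(k-1)²)`
(proof of Theorem 6.11 of the paper). -/
def heptagonCurve (k : ℤ) : WeierstrassCurve ℚ :=
  { a₁ := -(4 * (k : ℚ) + 2)
    a₂ := -(k : ℚ) * (2 * (k : ℚ) + 1) / ((k : ℚ) + 2)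
    a₃ := 4 * (k : ℚ) * ((k : ℚ) + 1) ^ 4 * (2 * (k : ℚ) + 1) /
      (((k : ℚ) + 2) ^ 2 * ((k : ℚ) - 1) ^ 2)
    a₄ := 0
    a₆ := 0 }

open WeierstrassCurve

/-- At `k = 1` and `k = -2` both sides vanish, since division by zero makes `a₃ = 0` there. -/
theorem heptagonCurve_Δ (k : ℤ) : (heptagonCurve k).Δ = -27 * (heptagonCurve k).a₃ ^ 4 := by
  by_cases h₂ : (k : ℚ) + 2 = 0
  · simp [heptagonCurve, Δ, b₂, b₄, b₆, b₈, h₂]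
  by_cases h₁ : (k : ℚ) - 1 = 0
  · simp [heptagonCurve, Δ, b₂, b₄, b₆, b₈, h₁]
  simp only [heptagonCurve, Δ, b₂, b₄, b₆, b₈]
  field_simp
  ring

theorem heptagonCurve_a₃_pos (k : ℤ) (hk : 2 ≤ k) : 0 < (heptagonCurve k).a₃ := by
  have hk' : (2 : ℚ) ≤ k := by exact_mod_cast hk
  have hk_pos : (0 : ℚ) < k := by linarith
  have hk_sub_one_pos : (0 : ℚ) < k - 1 := by linarith
  simp only [heptagonCurve]
  positivity

/-- For every integer `k ≥ 2` the discriminant of the heptagonal curve is nonzero;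
in particular it is a smooth elliptic curve over `ℚ`. -/
theorem heptagonCurve_discriminant_ne_zero (k : ℤ) (hk : 2 ≤ k) :
    (heptagonCurve k).Δ ≠ 0 := by
  rw [heptagonCurve_Δ]
  exact mul_ne_zero (by norm_num) (pow_ne_zero 4 (heptagonCurve_a₃_pos k hk).ne')
end

section
/- For every integer k ≥ 2, with e = −(4k+2), a = −k(2k+1)/(k+2), b = 4k(k+1)⁴(2k+1)/((k+2)²(k−1)²), the j-invariant of the Weierstrass curve C_k : y² + e·x·y + b·y = x³ + a·x² over ℚ is not an integer: there is no n ∈ ℤ with j(C_k) = n. (Explicitly, j(C_k) = [−4096(k¹²+1) − 24576(k¹¹+k) − 58368(k¹⁰+k²) − 66560(k⁹+k³) − 9216(k⁸+k⁴) + 92160(k⁷+k⁵) + 141312k⁶] / [27(k⁸+4k⁷+6k⁶+4k⁵+k⁴)].) -/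
/-- The numerator of the j-invariant of the heptagonal curve, as an integer polynomial. -/
def heptagonN (k : ℤ) : ℤ :=
  -4096 * (k ^ 12 + 1) - 24576 * (k ^ 11 + k) - 58368 * (k ^ 10 + k ^ 2)
    - 66560 * (k ^ 9 + k ^ 3) - 9216 * (k ^ 8 + k ^ 4) + 92160 * (k ^ 7 + k ^ 5)
    + 141312 * k ^ 6

lemma heptagonN_add_4096 (k : ℤ) :
    heptagonN k + 4096 = k * (k + 1) *
      (-4096 * k ^ 10 - 20480 * k ^ 9 - 37888 * k ^ 8 - 28672 * k ^ 7 + 19456 * k ^ 6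
        + 72704 * k ^ 5 + 68608 * k ^ 4 + 23552 * k ^ 3 - 32768 * k ^ 2 - 33792 * k
        - 24576) := by
  unfold heptagonN; ring

/-- For every integer `k ≥ 2`, the j-invariant `c₄³ / Δ` of the heptagonal curve is not an
integer: there is no `n : ℤ` with `j(C_k) = n`. In the proof of Theorem 6.11 this is used, via
Silverman's criterion, to deduce that the curve has no complex multiplication. -/
theorem heptagonCurve_j_not_integer (k : ℤ) (hk : 2 ≤ k) :
    ¬ ∃ n : ℤ, (heptagonCurve k).c₄ ^ 3 / (heptagonCurve k).Δ = (n : ℚ) := by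
  rintro ⟨n, hn⟩
  have hK2 : (2 : ℚ) ≤ (k : ℚ) := by exact_mod_cast hk
  have h1 : (k : ℚ) - 1 ≠ 0 := by linarith
  have h2 : (k : ℚ) + 2 ≠ 0 := by linarith
  have h3 : (k : ℚ) + 1 ≠ 0 := by linarith
  have h4 : (k : ℚ) ≠ 0 := by linarith
  have h5 : 2 * (k : ℚ) + 1 ≠ 0 := by linarith
  have hKpos : (0 : ℚ) < (k : ℚ) := by linarith
  -- closed form of the discriminant
  have hΔ : (heptagonCurve k).Δ =
      -6912 * (k : ℚ) ^ 4 * ((k : ℚ) + 1) ^ 16 * (2 * (k : ℚ) + 1) ^ 4 /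
        (((k : ℚ) + 2) ^ 8 * ((k : ℚ) - 1) ^ 8) := by
    simp only [WeierstrassCurve.Δ, WeierstrassCurve.b₂, WeierstrassCurve.b₄,
      WeierstrassCurve.b₆, WeierstrassCurve.b₈, heptagonCurve]
    field_simp
    ring
  have hΔne : (heptagonCurve k).Δ ≠ 0 := by
    rw [hΔ]
    have h6 : ((k : ℚ)) ^ 4 ≠ 0 := by positivity
    have h7 : ((k : ℚ) + 1) ^ 16 ≠ 0 := by positivity
    have h8 : (2 * (k : ℚ) + 1) ^ 4 ≠ 0 := by positivity
    exact div_ne_zero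
      (mul_ne_zero (mul_ne_zero (mul_ne_zero (by norm_num) h6) h7) h8) (by positivity)
  -- the key identity relating c₄³, Δ and the integer polynomial N
  have hid : (heptagonCurve k).c₄ ^ 3 * (27 * (k : ℚ) ^ 4 * ((k : ℚ) + 1) ^ 4) =
      ((heptagonN k : ℤ) : ℚ) * (heptagonCurve k).Δ := by
    rw [hΔ]
    simp only [WeierstrassCurve.c₄, WeierstrassCurve.b₂, WeierstrassCurve.b₄, heptagonCurve,
      heptagonN]
    push_cast
    field_simp
    ring
  -- deduce the integer equation
  rw [div_eq_iff hΔne] at hn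
  rw [hn] at hid
  have hcancel : ((n : ℚ) * (27 * (k : ℚ) ^ 4 * ((k : ℚ) + 1) ^ 4)) * (heptagonCurve k).Δ
      = ((heptagonN k : ℤ) : ℚ) * (heptagonCurve k).Δ := by linear_combination hid
  have hmain : (n : ℚ) * (27 * (k : ℚ) ^ 4 * ((k : ℚ) + 1) ^ 4)
      = ((heptagonN k : ℤ) : ℚ) := mul_right_cancel₀ hΔne hcancel
  have hZ : heptagonN k = 27 * k ^ 4 * (k + 1) ^ 4 * n := by
    have hq : ((heptagonN k : ℤ) : ℚ) = ((27 * k ^ 4 * (k + 1) ^ 4 * n : ℤ) : ℚ) := by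
      push_cast
      linear_combination -hmain
    exact_mod_cast hq
  -- pick an odd prime factor of k or k+1
  set q : ℤ := if k % 2 = 0 then k + 1 else k with hqdef
  have hqodd : q % 2 = 1 := by
    by_cases h : k % 2 = 0 <;> simp only [hqdef, h, if_true, if_false, reduceIte] <;> omega
  have hq3 : 3 ≤ q := by
    by_cases h : k % 2 = 0 <;> simp only [hqdef, h, if_true, if_false, reduceIte] <;> omega
  have hqdvd : q ∣ k * (k + 1) := by
    by_cases h : k % 2 = 0
    · simp only [hqdef, h, reduceIte, if_true]
      exact dvd_mul_left (k + 1) k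
    · simp only [hqdef, h, reduceIte, if_false]
      exact dvd_mul_right k (k + 1)
  set p : ℕ := q.natAbs.minFac with hpdef
  have hqna : q.natAbs ≠ 1 := by omega
  have pp : p.Prime := Nat.minFac_prime hqna
  have hpq : (p : ℤ) ∣ q :=
    (Int.ofNat_dvd.mpr (Nat.minFac_dvd q.natAbs)).trans (Int.natAbs_dvd.mpr dvd_rfl)
  have hpodd : p ≠ 2 := by
    intro h
    have h2q : (2 : ℤ) ∣ q := by
      have h' := hpq
      rw [h] at h'
      exact_mod_cast h'
    obtain ⟨c, hc⟩ := h2q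
    omega
  have hpN : (p : ℤ) ∣ heptagonN k := by
    rw [hZ]
    exact (hpq.trans hqdvd).trans ⟨27 * k ^ 3 * (k + 1) ^ 3 * n, by ring⟩
  have hpN4 : (p : ℤ) ∣ heptagonN k + 4096 := by
    rw [heptagonN_add_4096]
    exact dvd_mul_of_dvd_left (hpq.trans hqdvd) _
  have hp4096 : (p : ℤ) ∣ 4096 := by
    have h := dvd_sub hpN4 hpN
    simpa using h
  have h212 : p ∣ 2 ^ 12 := by
    have h4096 : (2 : ℕ) ^ 12 = 4096 := by norm_num
    rw [h4096]
    exact_mod_cast hp4096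
  exact hpodd ((Nat.prime_dvd_prime_iff_eq pp Nat.prime_two).mp (pp.dvd_of_dvd_pow h212))
end

section
/- Let r, s ≥ 1 be integers and let a₁, …, a_r ∈ ℤˢ be nonzero integer vectors, a_i = (a_{i1}, …, a_{is}). Then for all sufficiently large primes q there exist an invertible 2×2 matrix γ over ℤ/qℤ with γ ≠ 1 which has 1 as an eigenvalue (i.e. there is a nonzero vector v ∈ (ℤ/qℤ)² with γv = v), and vectors τ₀, τ₁, …, τ_s ∈ (ℤ/qℤ)², such that τ₀ lies in the image of the linear map γ − 1 on (ℤ/qℤ)², while for every i = 1, …, r the vector Σ_{j=1}^{s} a_{ij} τ_j does not lie in the image of γ − 1. -/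
/-!
Take for `γ` the transvection `1 + E₀₁`: it is unipotent, so it fixes `e₀`, and `γ - 1 = E₀₁`
has image the line `𝔽_q e₀`. Choosing `τ₀ = 0` and `τⱼ = tʲ e₁`, the vector `Σⱼ aᵢⱼ τⱼ` is
`Pᵢ(t) e₁` with `Pᵢ = Σⱼ aᵢⱼ Xʲ`, so it suffices to find `t ∈ 𝔽_q` that is a root of no `Pᵢ`.
Once `q` exceeds every `|aᵢⱼ|` the `Pᵢ` are nonzero mod `q`, and once `q > r s` their product
has fewer roots than `𝔽_q` has elements.
-/

open Polynomial Cardinal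

namespace Matrix

variable {n R : Type*} [DecidableEq n] [CommRing R]

theorem transvection_sub_one (i j : n) (c : R) : transvection i j c - 1 = single i j c :=
  add_sub_cancel_left _ _

theorem transvection_sub_one_mulVec_apply_of_ne [Fintype n] {i k : n} (hk : k ≠ i) (j : n)
    (c : R) (w : n → R) : ((transvection i j c - 1) *ᵥ w) k = 0 := by
  rw [transvection_sub_one, single_mulVec, Function.update_of_ne hk, Pi.zero_apply]

theorem transvection_mulVec_single_of_ne [Fintype n] {i j : n} (h : i ≠ j) (c : R) :
    transvection i j c *ᵥ Pi.single i 1 = Pi.single i 1 := by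
  rw [transvection, add_mulVec, one_mulVec, single_mulVec, Pi.single_eq_of_ne h.symm, mul_zero,
    Function.update_eq_self_iff.mpr (Pi.zero_apply i).symm, add_zero]

theorem transvection_ne_one {i j : n} (h : i ≠ j) {c : R} (hc : c ≠ 0) :
    transvection i j c ≠ 1 := fun h1 =>
  hc (by simpa [transvection, one_apply_ne h] using congr_fun₂ h1 i j)

theorem isUnit_transvection [Fintype n] {i j : n} (h : i ≠ j) (c : R) :
    IsUnit (transvection i j c) :=
  (isUnit_iff_isUnit_det _).mpr (by rw [det_transvection_of_ne i j h]; exact isUnit_one)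

end Matrix

namespace Polynomial

variable {R : Type*} [CommRing R]

theorem eval_ofFn [DecidableEq R] {n : ℕ} (v : Fin n → R) (t : R) :
    (ofFn n v).eval t = ∑ i, v i * t ^ (i : ℕ) := by
  simp [ofFn_eq_sum_monomial, eval_finsetSum]

theorem exists_forall_eval_ne_zero [IsDomain R] {ι : Type*} [Fintype ι] (P : ι → R[X])
    (hP : ∀ i, P i ≠ 0) (hdeg : ∑ i, (P i).natDegree < #R) : ∃ t, ∀ i, (P i).eval t ≠ 0 := by
  have hprod : ∏ i, P i ≠ 0 := Finset.prod_ne_zero_iff.mpr fun i _ => hP i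
  obtain ⟨t, ht⟩ := (∏ i, P i).exists_eval_ne_zero_of_natDegree_lt_card hprod
    (lt_of_le_of_lt (by exact_mod_cast natDegree_prod_le _ _) hdeg)
  exact ⟨t, fun i hi => ht (by rw [eval_prod]; exact Finset.prod_eq_zero (Finset.mem_univ i) hi)⟩

end Polynomial

theorem exists_forall_sum_mul_pow_ne_zero {R ι : Type*} [CommRing R] [IsDomain R] [Fintype ι]
    {s : ℕ} (c : ι → Fin s → R) (hc : ∀ i, c i ≠ 0) (hcard : Fintype.card ι * s < #R) :
    ∃ t, ∀ i, ∑ j, c i j * t ^ (j : ℕ) ≠ 0 := by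
  classical
  have hdeg : ∀ i, (ofFn s (c i)).natDegree ≤ s := fun i =>
    natDegree_le_of_degree_le (ofFn_degree_lt (c i)).le
  obtain ⟨t, ht⟩ := exists_forall_eval_ne_zero (fun i => ofFn s (c i))
    (fun i => (map_ne_zero_iff _ (injective_ofFn s)).mpr (hc i))
    (lt_of_le_of_lt (by exact_mod_cast (Finset.sum_le_card_nsmul _ _ _ fun i _ => hdeg i)) hcard)
  exact ⟨t, fun i => by simpa [eval_ofFn] using ht i⟩

theorem ZMod.intCast_ne_zero_of_natAbs_lt {q : ℕ} {x : ℤ} (hx : x ≠ 0) (hxq : x.natAbs < q) :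
    (x : ZMod q) ≠ 0 := by
  rw [Ne, ZMod.intCast_zmod_eq_zero_iff_dvd]
  exact fun h => hx (Int.eq_zero_of_dvd_of_natAbs_lt_natAbs h (by simpa using hxq))

theorem exists_frobenius_class_general (r s : ℕ)
    (a : Fin r → Fin s → ℤ) (ha : ∀ i, a i ≠ 0) :
    ∃ N : ℕ, ∀ q : ℕ, q.Prime → N ≤ q →
      ∃ γ : Matrix (Fin 2) (Fin 2) (ZMod q),
        IsUnit γ ∧ γ ≠ 1 ∧
        (∃ v : Fin 2 → ZMod q, v ≠ 0 ∧ γ.mulVec v = v) ∧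
        ∃ (τ₀ : Fin 2 → ZMod q) (τ : Fin s → Fin 2 → ZMod q),
          (∃ w : Fin 2 → ZMod q, (γ - 1).mulVec w = τ₀) ∧
          ∀ i : Fin r,
            ¬ ∃ w : Fin 2 → ZMod q, (γ - 1).mulVec w = ∑ j, (a i j : ZMod q) • τ j := by
  set A := Finset.univ.sup fun p : Fin r × Fin s => (a p.1 p.2).natAbs
  refine ⟨r * s + A + 1, fun q hq hqN => ?_⟩
  have : Fact q.Prime := ⟨hq⟩
  have ha_mod : ∀ i, (fun j => (a i j : ZMod q)) ≠ 0 := fun i h => by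
    obtain ⟨j, hj⟩ := Function.ne_iff.mp (ha i)
    have hA : (a i j).natAbs ≤ A :=
      Finset.le_sup (f := fun p => (a p.1 p.2).natAbs) (Finset.mem_univ (i, j))
    exact ZMod.intCast_ne_zero_of_natAbs_lt hj (by omega) (congr_fun h j)
  obtain ⟨t, ht⟩ := exists_forall_sum_mul_pow_ne_zero _ ha_mod
    (by rw [Fintype.card_fin, mk_fintype, ZMod.card]; exact_mod_cast (by omega : r * s < q))
  have h01 : (0 : Fin 2) ≠ 1 := by decide
  refine ⟨Matrix.transvection 0 1 1, Matrix.isUnit_transvection h01 1,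
    Matrix.transvection_ne_one h01 one_ne_zero,
    ⟨Pi.single 0 1, by simp, Matrix.transvection_mulVec_single_of_ne h01 1⟩,
    0, fun j => Pi.single 1 (t ^ (j : ℕ)), ⟨0, Matrix.mulVec_zero _⟩, ?_⟩
  rintro i ⟨w, hw⟩
  have hw₁ := congr_fun hw 1
  rw [Matrix.transvection_sub_one_mulVec_apply_of_ne h01.symm] at hw₁
  exact ht i (by simpa [Finset.sum_apply] using hw₁.symm)

/-- Nonemptiness of the conjugacy class to which the Chebotarev density theorem is applied in
the proof of Lemma 5.2 of the paper: given nonzero integer vectors `a₁, …, a_r ∈ ℤˢ`, for all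
sufficiently large primes `q` there exist an invertible `2×2` matrix `γ ≠ 1` over `ℤ/qℤ` having
`1` as an eigenvalue, and vectors `τ₀, τ₁, …, τ_s ∈ (ℤ/qℤ)²`, such that `τ₀ ∈ Im(γ - 1)` while
`Σⱼ a_{ij} τ_j ∉ Im(γ - 1)` for every `i`. -/
theorem exists_frobenius_class (r s : ℕ) (hr : 1 ≤ r) (hs : 1 ≤ s)
    (a : Fin r → Fin s → ℤ) (ha : ∀ i, a i ≠ 0) :
    ∃ N : ℕ, ∀ q : ℕ, q.Prime → N ≤ q →
      ∃ γ : Matrix (Fin 2) (Fin 2) (ZMod q),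
        IsUnit γ ∧ γ ≠ 1 ∧
        (∃ v : Fin 2 → ZMod q, v ≠ 0 ∧ γ.mulVec v = v) ∧
        ∃ (τ₀ : Fin 2 → ZMod q) (τ : Fin s → Fin 2 → ZMod q),
          (∃ w : Fin 2 → ZMod q, (γ - 1).mulVec w = τ₀) ∧
          ∀ i : Fin r,
            ¬ ∃ w : Fin 2 → ZMod q, (γ - 1).mulVec w = ∑ j, (a i j : ZMod q) • τ j :=
  exists_frobenius_class_general r s a ha
end
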